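/- Let A ∈ ℝ^{n×d} have a singular value decomposition A = U Σ Vᵀ, let ε > 0, let j ∈ {1,…,d−1}, and let m be an integer with m ≥ ⌈j/ε⌉ + j − 1 and m ≤ min(n,d) − 1. Set Δ = ‖A − A^(m)‖_F². Then for every matrix Y ∈ ℝ^{d×(d−j)} with orthonormal columns, ‖AY‖_F² ≤ ‖A^(m)Y‖_F² + Δ ≤ (1+ε) · ‖AY‖_F². -/
import Mathlib


open Matrix

/-- Identify a plain vector in `Fin d → ℝ` with a point of Euclidean space `ℝ^d`. -/
noncomputable def toEuc {d : ℕ} (v : Fin d → ℝ) : EuclideanSpace ℝ (Fin d) :=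
  (WithLp.equiv 2 (Fin d → ℝ)).symm v

/-- Squared Euclidean distance from a point (given as a row vector) to a set. -/
noncomputable def rowDistSq {d : ℕ} (p : Fin d → ℝ) (C : Set (EuclideanSpace ℝ (Fin d))) : ℝ :=
  (Metric.infDist (toEuc p) C) ^ 2

/-- `dist²(A, C)`: sum of squared Euclidean distances of the rows of `A` to the set `C`. -/
noncomputable def matDistSq {n d : ℕ} (A : Matrix (Fin n) (Fin d) ℝ)
    (C : Set (EuclideanSpace ℝ (Fin d))) : ℝ :=
  ∑ i, rowDistSq (A i) C

/-- Squared Frobenius norm of a matrix. -/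
noncomputable def frobSq {n d : ℕ} (A : Matrix (Fin n) (Fin d) ℝ) : ℝ :=
  ∑ i, ∑ j, (A i j) ^ 2

/-- The rectangular diagonal `n × d` matrix with diagonal entries `σ 0, σ 1, …`. -/
def svdDiag (n d : ℕ) (σ : ℕ → ℝ) : Matrix (Fin n) (Fin d) ℝ :=
  Matrix.of fun i j => if (i : ℕ) = (j : ℕ) then σ (i : ℕ) else 0

/-- The truncation keeping only the first `m` diagonal entries of `svdDiag n d σ`. -/
def svdDiagTrunc (n d m : ℕ) (σ : ℕ → ℝ) : Matrix (Fin n) (Fin d) ℝ :=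
  Matrix.of fun i j => if (i : ℕ) = (j : ℕ) ∧ (i : ℕ) < m then σ (i : ℕ) else 0

lemma frobSq_eq_trace {n d : ℕ} (A : Matrix (Fin n) (Fin d) ℝ) :
    frobSq A = Matrix.trace (Aᵀ * A) := by
  unfold frobSq Matrix.trace
  rw [Finset.sum_comm]
  simp [Matrix.mul_apply, Matrix.diag, sq]

lemma trace_conj {n d e : ℕ} (U : Matrix (Fin n) (Fin n) ℝ) (V : Matrix (Fin d) (Fin d) ℝ)
    (hU : Uᵀ * U = 1) (W : Matrix (Fin n) (Fin d) ℝ) (Y : Matrix (Fin d) (Fin e) ℝ) :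
    frobSq (U * W * Vᵀ * Y) = Matrix.trace ((Wᵀ * W) * ((Vᵀ * Y) * (Vᵀ * Y)ᵀ)) := by
  rw [frobSq_eq_trace]
  have h1 : (U * W * Vᵀ * Y)ᵀ * (U * W * Vᵀ * Y)
      = (Vᵀ * Y)ᵀ * ((Wᵀ * W) * (Vᵀ * Y)) := by
    have hU' : ∀ (X : Matrix (Fin n) (Fin e) ℝ), Uᵀ * (U * X) = X := fun X => by
      rw [← Matrix.mul_assoc, hU, Matrix.one_mul]
    simp only [Matrix.transpose_mul, Matrix.transpose_transpose, Matrix.mul_assoc]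
    rw [hU']
  rw [h1, Matrix.trace_mul_comm, Matrix.mul_assoc]

lemma diagLike_mul {n d : ℕ} (f g : ℕ → ℝ) (k l : Fin d) :
    (∑ i : Fin n, (if (i:ℕ) = (k:ℕ) then f i else 0) * (if (i:ℕ) = (l:ℕ) then g i else 0))
      = if (k:ℕ) = (l:ℕ) ∧ (k:ℕ) < n then f k * g k else 0 := by
  rw [Fin.sum_univ_eq_sum_range
    (fun i => (if i = (k:ℕ) then f i else 0) * (if i = (l:ℕ) then g i else 0)) n]
  by_cases hkl : (k:ℕ) = (l:ℕ)
  · rw [← hkl]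
    by_cases hkn : (k:ℕ) < n
    · rw [if_pos ⟨rfl, hkn⟩]
      rw [Finset.sum_eq_single (k:ℕ)]
      · simp
      · intro b _ hb; simp [hb]
      · intro h; exact absurd (Finset.mem_range.mpr hkn) h
    · rw [if_neg (fun h => hkn h.2)]
      apply Finset.sum_eq_zero
      intro i hi
      have : i ≠ (k:ℕ) := by
        intro h; exact hkn (h ▸ Finset.mem_range.mp hi)
      simp [this]
  · rw [if_neg (fun h => hkl h.1)]
    apply Finset.sum_eq_zero
    intro i _
    by_cases h1 : i = (k:ℕ)
    · have : i ≠ (l:ℕ) := fun h2 => hkl (h1 ▸ h2)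
      simp [this]
    · simp [h1]

/-- `XᵀX` is diagonal for a "diagonal-like" rectangular matrix. -/
lemma diagLike_transpose_mul {n d : ℕ} (h : ℕ → ℝ) :
    ((Matrix.of fun (i : Fin n) (j : Fin d) =>
        if (i:ℕ) = (j:ℕ) then h (i:ℕ) else 0)ᵀ *
      (Matrix.of fun (i : Fin n) (j : Fin d) => if (i:ℕ) = (j:ℕ) then h (i:ℕ) else 0))
      = Matrix.diagonal (fun k : Fin d => if (k:ℕ) < n then h k * h k else 0) := by
  ext k l
  rw [Matrix.mul_apply]
  simp only [Matrix.transpose_apply, Matrix.of_apply]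
  rw [diagLike_mul h h k l, Matrix.diagonal_apply]
  by_cases hkl : k = l
  · subst hkl; simp
  · have : ¬ ((k:ℕ) = (l:ℕ)) := fun h' => hkl (Fin.ext h')
    simp [this, hkl]

lemma svdDiagTrunc_eq (n d m : ℕ) (σ : ℕ → ℝ) :
    svdDiagTrunc n d m σ = Matrix.of fun (i : Fin n) (j : Fin d) =>
      if (i:ℕ) = (j:ℕ) then (if (i:ℕ) < m then σ (i:ℕ) else 0) else 0 := by
  ext i j
  simp only [svdDiagTrunc, Matrix.of_apply]
  split_ifs <;> (try omega) <;> simp_all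

lemma svdDiag_sub_trunc (n d m : ℕ) (σ : ℕ → ℝ) :
    svdDiag n d σ - svdDiagTrunc n d m σ = Matrix.of fun (i : Fin n) (j : Fin d) =>
      if (i:ℕ) = (j:ℕ) then (if (i:ℕ) < m then 0 else σ (i:ℕ)) else 0 := by
  ext i j
  simp only [svdDiag, svdDiagTrunc, Matrix.sub_apply, Matrix.of_apply]
  split_ifs <;> (try omega) <;> simp_all

lemma trace_diagonal_mul {d : ℕ} (g : Fin d → ℝ) (M : Matrix (Fin d) (Fin d) ℝ) :
    Matrix.trace (Matrix.diagonal g * M) = ∑ k, g k * M k k := by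
  unfold Matrix.trace
  simp [Matrix.diag, Matrix.diagonal_mul]

lemma count_ge {d c : ℕ} :
    (∑ k : Fin d, (if c ≤ (k:ℕ) then (1:ℝ) else 0)) = (d - c : ℕ) := by
  rw [Fin.sum_univ_eq_sum_range (fun i => if c ≤ i then (1:ℝ) else 0) d,
    Finset.sum_ite, Finset.sum_const, Finset.sum_const]
  have : (Finset.range d).filter (fun i => c ≤ i) = Finset.Ico c d := by
    ext i; simp [Finset.mem_range, Finset.mem_Ico]; omega
  simp [this, Nat.card_Ico]

/-- with `A = U Σ Vᵀ` an SVD, `ε > 0`, `1 ≤ j ≤ d-1`,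
`⌈j/ε⌉ + j - 1 ≤ m ≤ min(n,d) - 1` and `Δ = ‖A - A^(m)‖_F²`, for every
`Y ∈ ℝ^{d×(d-j)}` with orthonormal columns:
`‖AY‖_F² ≤ ‖A^(m)Y‖_F² + Δ ≤ (1+ε)·‖AY‖_F²`. -/
theorem stmt3 {n d j : ℕ} (A : Matrix (Fin n) (Fin d) ℝ)
    (U : Matrix (Fin n) (Fin n) ℝ) (V : Matrix (Fin d) (Fin d) ℝ) (σ : ℕ → ℝ)
    (hU : Uᵀ * U = 1) (hV : Vᵀ * V = 1)
    (hσ0 : ∀ i, i < min n d → 0 ≤ σ i)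
    (hσa : ∀ i i', i ≤ i' → i' < min n d → σ i' ≤ σ i)
    (hA : A = U * svdDiag n d σ * Vᵀ)
    (ε : ℝ) (hε : 0 < ε) (hj1 : 1 ≤ j) (hj2 : j < d)
    (m : ℕ) (hm1 : ⌈(j : ℝ) / ε⌉₊ + j - 1 ≤ m) (hm2 : m + 1 ≤ min n d)
    (Y : Matrix (Fin d) (Fin (d - j)) ℝ) (hY : Yᵀ * Y = 1) :
    frobSq (A * Y) ≤ frobSq ((U * svdDiagTrunc n d m σ * Vᵀ) * Y) +
        frobSq (A - U * svdDiagTrunc n d m σ * Vᵀ) ∧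
      frobSq ((U * svdDiagTrunc n d m σ * Vᵀ) * Y) +
          frobSq (A - U * svdDiagTrunc n d m σ * Vᵀ) ≤ (1 + ε) * frobSq (A * Y) := by
  have hn : m + 1 ≤ n := le_trans hm2 (min_le_left _ _)
  have hd : m + 1 ≤ d := le_trans hm2 (min_le_right _ _)
  have hVV : V * Vᵀ = 1 := mul_eq_one_comm.mp hV
  set W := svdDiag n d σ with hW
  set T := svdDiagTrunc n d m σ with hT
  set Z : Matrix (Fin d) (Fin (d-j)) ℝ := Vᵀ * Y with hZdef
  have hZ : Zᵀ * Z = 1 := by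
    calc Zᵀ * Z = Yᵀ * ((V * Vᵀ) * Y) := by
          rw [hZdef]; simp [Matrix.transpose_mul, Matrix.mul_assoc]
    _ = 1 := by rw [hVV, Matrix.one_mul, hY]
  set M := Z * Zᵀ with hMdef
  have hMs : ∀ k l, M l k = M k l := fun k l => by
    simp [hMdef, Matrix.mul_apply, mul_comm]
  have hc0 : ∀ k, 0 ≤ M k k := fun k => by
    rw [hMdef, Matrix.mul_apply]
    exact Finset.sum_nonneg fun i _ => mul_self_nonneg _
  have hMidem : M * M = M := by
    rw [hMdef, Matrix.mul_assoc, ← Matrix.mul_assoc Zᵀ, hZ, Matrix.one_mul]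
  have hc1 : ∀ k, M k k ≤ 1 := fun k => by
    have h1 : M k k = ∑ l, (M k l)^2 := by
      conv_lhs => rw [← hMidem]
      rw [Matrix.mul_apply]
      exact Finset.sum_congr rfl fun l _ => by rw [hMs k l, sq]
    have h2 : (M k k)^2 ≤ ∑ l, (M k l)^2 :=
      Finset.single_le_sum (f := fun l => (M k l)^2) (fun l _ => sq_nonneg _)
        (Finset.mem_univ k)
    nlinarith [hc0 k]
  have htr : ∑ k, M k k = ((d - j : ℕ) : ℝ) := by
    have h1 : Matrix.trace M = ((d - j : ℕ) : ℝ) := by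
      rw [hMdef, Matrix.trace_mul_comm, hZ, Matrix.trace_one]
      simp
    simpa [Matrix.trace, Matrix.diag] using h1
  -- diagonal computations
  have hWW : Wᵀ * W = Matrix.diagonal
      (fun k : Fin d => if (k:ℕ) < n then σ (k:ℕ) * σ (k:ℕ) else 0) :=
    diagLike_transpose_mul σ
  have hTT : Tᵀ * T = Matrix.diagonal
      (fun k : Fin d => if (k:ℕ) < m then σ (k:ℕ) * σ (k:ℕ) else 0) := by
    rw [hT, svdDiagTrunc_eq, diagLike_transpose_mul (fun i => if i < m then σ i else 0)]
    apply congrArg Matrix.diagonal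
    funext k
    split_ifs <;> first | ring1 | omega | (exfalso; omega)
  have hRR : (W - T)ᵀ * (W - T) = Matrix.diagonal
      (fun k : Fin d => if (k:ℕ) < n ∧ m ≤ (k:ℕ) then σ (k:ℕ) * σ (k:ℕ) else 0) := by
    rw [hW, hT, svdDiag_sub_trunc, diagLike_transpose_mul (fun i => if i < m then 0 else σ i)]
    apply congrArg Matrix.diagonal
    funext k
    split_ifs <;> first | ring1 | omega | (exfalso; omega)
  set aa : Fin d → ℝ := fun k => if (k:ℕ) < n then σ (k:ℕ) * σ (k:ℕ) else 0 with haa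
  set tt : Fin d → ℝ := fun k => if (k:ℕ) < m then σ (k:ℕ) * σ (k:ℕ) else 0 with htt
  set rr : Fin d → ℝ := fun k => if (k:ℕ) < n ∧ m ≤ (k:ℕ) then σ (k:ℕ) * σ (k:ℕ) else 0 with hrr
  have hAY : frobSq (A * Y) = ∑ k, aa k * M k k := by
    rw [hA, trace_conj U V hU W Y, hWW, ← hZdef, ← hMdef, trace_diagonal_mul]
  have hTY : frobSq ((U * T * Vᵀ) * Y) = ∑ k, tt k * M k k := by
    rw [trace_conj U V hU T Y, hTT, ← hZdef, ← hMdef, trace_diagonal_mul]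
  have hsub : A - U * T * Vᵀ = U * (W - T) * Vᵀ * (1 : Matrix (Fin d) (Fin d) ℝ) := by
    rw [hA, Matrix.mul_one, Matrix.mul_sub, Matrix.sub_mul]
  have hDelta : frobSq (A - U * T * Vᵀ) = ∑ k, rr k := by
    rw [hsub, trace_conj U V hU (W - T) 1, hRR]
    have h1 : (Vᵀ * (1 : Matrix (Fin d) (Fin d) ℝ)) * (Vᵀ * 1)ᵀ = 1 := by
      rw [Matrix.mul_one, Matrix.transpose_transpose, hV]
    rw [h1, Matrix.mul_one, Matrix.trace_diagonal]
  -- pointwise decomposition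
  have hatr : ∀ k : Fin d, aa k = tt k + rr k := fun k => by
    simp only [haa, htt, hrr]
    split_ifs <;> (try omega) <;> (try ring) <;> omega
  have hsum_split : ∑ k, aa k * M k k = (∑ k, tt k * M k k) + ∑ k, rr k * M k k := by
    rw [← Finset.sum_add_distrib]
    exact Finset.sum_congr rfl fun k _ => by rw [hatr k]; ring
  have hrr0 : ∀ k, 0 ≤ rr k := fun k => by
    simp only [hrr]; split_ifs
    · exact mul_self_nonneg _
    · exact le_refl 0
  have hkmin : ∀ k : Fin d, (k:ℕ) < n → (k:ℕ) < min n d := fun k hk =>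
    lt_min hk k.isLt
  have hmmin : m < min n d := by omega
  have hσm0 : 0 ≤ σ m := hσ0 m hmmin
  set sm2 : ℝ := σ m * σ m with hsm2def
  have hsm2 : 0 ≤ sm2 := mul_self_nonneg _
  -- first inequality
  have goal1 : ∑ k, aa k * M k k ≤ (∑ k, tt k * M k k) + ∑ k, rr k := by
    rw [hsum_split]
    have : ∑ k, rr k * M k k ≤ ∑ k, rr k :=
      Finset.sum_le_sum fun k _ => mul_le_of_le_one_right (hrr0 k) (hc1 k)
    linarith
  -- key1 : ∑ rr - ∑ rr·c ≤ sm2 * j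
  have key1 : (∑ k, rr k) - (∑ k, rr k * M k k) ≤ sm2 * (j:ℝ) := by
    have h1 : ∀ k : Fin d, rr k - rr k * M k k ≤ sm2 * (1 - M k k) := by
      intro k
      have hrle : rr k ≤ sm2 := by
        simp only [hrr, hsm2def]
        split_ifs with h
        · exact mul_le_mul (hσa m k h.2 (hkmin k h.1)) (hσa m k h.2 (hkmin k h.1))
            (hσ0 k (hkmin k h.1)) hσm0
        · exact hsm2
      have h2 : 0 ≤ 1 - M k k := by linarith [hc1 k]
      calc rr k - rr k * M k k = rr k * (1 - M k k) := by ring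
      _ ≤ sm2 * (1 - M k k) := mul_le_mul_of_nonneg_right hrle h2
    calc (∑ k, rr k) - (∑ k, rr k * M k k)
        = ∑ k, (rr k - rr k * M k k) := by rw [Finset.sum_sub_distrib]
      _ ≤ ∑ k : Fin d, sm2 * (1 - M k k) := Finset.sum_le_sum fun k _ => h1 k
      _ = sm2 * ((d:ℝ) - ((d - j : ℕ) : ℝ)) := by
          rw [← Finset.mul_sum, Finset.sum_sub_distrib, htr]
          simp [Finset.card_univ]
      _ = sm2 * (j:ℝ) := by
          rw [Nat.cast_sub hj2.le]; ring_nf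
  -- key2 : sm2 * (m+1-j) ≤ ∑ aa·c
  have key2 : sm2 * ((m:ℝ) + 1 - (j:ℝ)) ≤ ∑ k, aa k * M k k := by
    have step1 : ∑ k : Fin d, (if (k:ℕ) < m + 1 then sm2 * M k k else 0)
        ≤ ∑ k, aa k * M k k := by
      apply Finset.sum_le_sum
      intro k _
      by_cases h : (k:ℕ) < m + 1
      · have hkn : (k:ℕ) < n := by omega
        have h2 : sm2 ≤ aa k := by
          simp only [haa, hsm2def, if_pos hkn]
          have hkm : (k:ℕ) ≤ m := by omega
          exact mul_le_mul (hσa k m hkm hmmin) (hσa k m hkm hmmin)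
            hσm0 (hσ0 k (hkmin k hkn))
        rw [if_pos h]
        exact mul_le_mul_of_nonneg_right h2 (hc0 k)
      · rw [if_neg h]
        have : 0 ≤ aa k := by
          simp only [haa]; split_ifs
          · exact mul_self_nonneg _
          · exact le_refl 0
        exact mul_nonneg this (hc0 k)
    have step2 : sm2 * ((m:ℝ) + 1 - (j:ℝ))
        ≤ ∑ k : Fin d, (if (k:ℕ) < m + 1 then sm2 * M k k else 0) := by
      have hsplit : ∑ k : Fin d, (if (k:ℕ) < m + 1 then M k k else 0)
          = (∑ k, M k k) - ∑ k : Fin d, (if m + 1 ≤ (k:ℕ) then M k k else 0) := by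
        rw [← Finset.sum_sub_distrib]
        apply Finset.sum_congr rfl
        intro k _
        by_cases h : (k:ℕ) < m + 1
        · rw [if_pos h, if_neg (by omega)]; ring
        · rw [if_neg h, if_pos (by omega)]; ring
      have hub : ∑ k : Fin d, (if m + 1 ≤ (k:ℕ) then M k k else 0)
          ≤ ((d - (m+1) : ℕ) : ℝ) := by
        rw [← count_ge (d := d) (c := m + 1)]
        apply Finset.sum_le_sum
        intro k _
        split_ifs
        · exact hc1 k
        · exact le_refl 0
      have hlb : ((m:ℝ) + 1 - (j:ℝ)) ≤ ∑ k : Fin d, (if (k:ℕ) < m + 1 then M k k else 0) := by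
        rw [hsplit, htr]
        have c1 : ((d - j : ℕ) : ℝ) = (d:ℝ) - (j:ℝ) := Nat.cast_sub hj2.le
        have c2 : ((d - (m+1) : ℕ) : ℝ) = (d:ℝ) - ((m:ℝ) + 1) := by
          rw [Nat.cast_sub hd]; push_cast; ring
        rw [c1]
        linarith [hub, c2 ▸ hub]
      calc sm2 * ((m:ℝ) + 1 - (j:ℝ))
          ≤ sm2 * ∑ k : Fin d, (if (k:ℕ) < m + 1 then M k k else 0) :=
            mul_le_mul_of_nonneg_left hlb hsm2
        _ = ∑ k : Fin d, (if (k:ℕ) < m + 1 then sm2 * M k k else 0) := by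
            rw [Finset.mul_sum]
            exact Finset.sum_congr rfl fun k _ => by split_ifs <;> simp
    exact le_trans step2 step1
  -- key3 : sm2 * j ≤ ε * (sm2 * (m+1-j))
  have key3 : sm2 * (j:ℝ) ≤ ε * (sm2 * ((m:ℝ) + 1 - (j:ℝ))) := by
    have hceil1 : 1 ≤ ⌈(j:ℝ)/ε⌉₊ := by
      rw [Nat.one_le_iff_ne_zero, ← Nat.pos_iff_ne_zero]
      exact Nat.ceil_pos.mpr (div_pos (by exact_mod_cast hj1) hε)
    have hnat : ⌈(j:ℝ)/ε⌉₊ + j ≤ m + 1 := by omega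
    have hcast : ((⌈(j:ℝ)/ε⌉₊ : ℝ)) ≤ (m:ℝ) + 1 - (j:ℝ) := by
      have := (Nat.cast_le (α := ℝ)).mpr hnat
      push_cast at this ⊢
      linarith
    have hdiv : (j:ℝ)/ε ≤ (m:ℝ) + 1 - (j:ℝ) := le_trans (Nat.le_ceil _) hcast
    have hjle : (j:ℝ) ≤ ε * ((m:ℝ) + 1 - (j:ℝ)) := by
      rw [div_le_iff₀ hε] at hdiv
      linarith [hdiv]
    calc sm2 * (j:ℝ) ≤ sm2 * (ε * ((m:ℝ) + 1 - (j:ℝ))) :=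
          mul_le_mul_of_nonneg_left hjle hsm2
      _ = ε * (sm2 * ((m:ℝ) + 1 - (j:ℝ))) := by ring
  have key2' : ε * (sm2 * ((m:ℝ) + 1 - (j:ℝ))) ≤ ε * ∑ k, aa k * M k k :=
    mul_le_mul_of_nonneg_left key2 hε.le
  constructor
  · rw [hAY, hTY, hDelta]; exact goal1
  · rw [hAY, hTY, hDelta]
    have hrrc : ∑ k, rr k * M k k ≤ ∑ k, rr k :=
      Finset.sum_le_sum fun k _ => mul_le_of_le_one_right (hrr0 k) (hc1 k)
    have expand : (1 + ε) * (∑ k, aa k * M k k)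
        = (∑ k, aa k * M k k) + ε * (∑ k, aa k * M k k) := by ring
    linarith [hsum_split, key1, key3, key2', hrrc, expand]
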